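/- arXiv:2002.04679 — 3 statements merged into one kernel-verified Lean document; each statement's English description precedes it below -/
import Mathlib

section
/- Let I, J be finite nonempty index sets, 0 ≤ ρ ≤ 1, λ : J → ℝ with λ_j > 0 for all j ∈ J and ∑_{j∈J} λ_j = 1, and η : I × J → ℝ with η_{i j} ∈ {−1, 1}. Suppose there is j̄ ∈ J with λ_{j̄} > (1 − ρ)/2 and for every i ∈ I, ∑_{j∈J} η_{i j} λ_j ≥ ρ. Then η_{i j̄} = 1 for every i ∈ I. -/
theorem stmt_3 (I J : Type*) [Fintype I] [Fintype J] [Nonempty I] [Nonempty J]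
    (ρ : ℝ) (hρ0 : 0 ≤ ρ) (hρ1 : ρ ≤ 1)
    (lam : J → ℝ) (eta : I → J → ℝ)
    (hpos : ∀ j, 0 < lam j)
    (hsum : ∑ j, lam j = 1)
    (hpm : ∀ i j, eta i j = -1 ∨ eta i j = 1)
    (jbar : J) (hj : (1 - ρ) / 2 < lam jbar)
    (h : ∀ i, ρ ≤ ∑ j, eta i j * lam j) :
    ∀ i, eta i jbar = 1 := by
  classical
  intro i
  rcases hpm i jbar with hneg | hone
  · exfalso
    have key : ∑ j, eta i j * lam j
        = eta i jbar * lam jbar + ∑ j ∈ Finset.univ.erase jbar, eta i j * lam j := by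
      rw [← Finset.add_sum_erase _ _ (Finset.mem_univ jbar)]
    have hbound : ∑ j ∈ Finset.univ.erase jbar, eta i j * lam j
        ≤ ∑ j ∈ Finset.univ.erase jbar, lam j := by
      apply Finset.sum_le_sum
      intro j _
      rcases hpm i j with hj' | hj' <;> rw [hj'] <;> nlinarith [hpos j]
    have herase : ∑ j ∈ Finset.univ.erase jbar, lam j = 1 - lam jbar := by
      have := Finset.add_sum_erase Finset.univ lam (Finset.mem_univ jbar)
      linarith [hsum ▸ this]
    have := h i
    rw [key, hneg] at this
    rw [herase] at hbound
    linarith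
  · exact hone
end

section
/- Let I, J be finite nonempty index sets, 0 ≤ ρ < 1, λ : J → ℝ with λ_j > 0 for all j ∈ J and ∑_{j∈J} λ_j = 1, and η : I × J → ℝ with η_{i j} ∈ {−1, 1}. Suppose |J| < 2/(1 − ρ) and for every i ∈ I, ∑_{j∈J} η_{i j} λ_j ≥ ρ. Then there exists j̄ ∈ J with η_{i j̄} = 1 for all i ∈ I. -/
theorem stmt_5 (I J : Type*) [Fintype I] [Fintype J] [Nonempty I] [Nonempty J]
    (ρ : ℝ) (hρ0 : 0 ≤ ρ) (hρ1 : ρ < 1)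
    (lam : J → ℝ) (eta : I → J → ℝ)
    (hpos : ∀ j, 0 < lam j)
    (hsum : ∑ j, lam j = 1)
    (hpm : ∀ i j, eta i j = -1 ∨ eta i j = 1)
    (hcard : (Fintype.card J : ℝ) < 2 / (1 - ρ))
    (h : ∀ i, ρ ≤ ∑ j, eta i j * lam j) :
    ∃ jbar, ∀ i, eta i jbar = 1 := by
  have h1ρ : 0 < 1 - ρ := by linarith
  -- there is jbar with lam jbar > (1-ρ)/2
  have hlt : ∑ _j : J, (1 - ρ) / 2 < ∑ j, lam j := by
    rw [hsum, Finset.sum_const, Finset.card_univ, nsmul_eq_mul]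
    have := (lt_div_iff₀ h1ρ).mp hcard
    nlinarith
  obtain ⟨jbar, -, hj⟩ := Finset.exists_lt_of_sum_lt hlt
  refine ⟨jbar, fun i => ?_⟩
  rcases hpm i jbar with hneg | hone
  · exfalso
    have key : ∑ j, ((1 - eta i j) * lam j + eta i j * lam j) = ∑ j, lam j :=
      Finset.sum_congr rfl fun j _ => by ring
    rw [Finset.sum_add_distrib, hsum] at key
    have hnn : ∀ j ∈ Finset.univ, 0 ≤ (1 - eta i j) * lam j := by
      intro j _
      rcases hpm i j with hj' | hj' <;> rw [hj'] <;> have := hpos j <;> nlinarith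
    have hge : 2 * lam jbar ≤ ∑ j, (1 - eta i j) * lam j := by
      have := Finset.single_le_sum hnn (Finset.mem_univ jbar)
      rw [hneg] at this; linarith
    have := h i
    nlinarith
  · exact hone
end

section
/- Let I, J be finite nonempty sets, 0 < ρ ≤ 1, η : I × J → ℝ with η_{i j} ∈ {−1, 1}, λ : J → ℝ with λ_j > 0 for all j, ∑_{j∈J} λ_j = 1, and suppose ∑_{j∈J} η_{i j} λ_j ≥ ρ for all i ∈ I. If some learner j̄ satisfies η_{i j̄} = −1 for some i ∈ I, then λ_{j̄} ≤ (1 − ρ)/2. -/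
theorem stmt_15 (I J : Type*) [Fintype I] [Fintype J] [Nonempty I] [Nonempty J]
    (ρ : ℝ) (hρ0 : 0 < ρ) (hρ1 : ρ ≤ 1)
    (eta : I → J → ℝ) (hpm : ∀ i j, eta i j = -1 ∨ eta i j = 1)
    (lam : J → ℝ) (hpos : ∀ j, 0 < lam j) (hsum : ∑ j, lam j = 1)
    (hfeas : ∀ i, ρ ≤ ∑ j, eta i j * lam j)
    (jbar : J) (i : I) (hmis : eta i jbar = -1) :
    lam jbar ≤ (1 - ρ) / 2 := by
  classical
  have key : ∑ j, eta i j * lam j ≤ 1 - 2 * lam jbar := by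
    have h1 : ∑ j, eta i j * lam j
        ≤ ∑ j, (if j = jbar then -lam jbar else lam j) := by
      apply Finset.sum_le_sum
      intro j _
      by_cases h : j = jbar
      · simp [h, hmis]
      · simp only [h, if_false]
        rcases hpm i j with he | he <;> rw [he] <;> nlinarith [hpos j]
    have h2 : ∑ j, (if j = jbar then -lam jbar else lam j)
        = (∑ j, lam j) - 2 * lam jbar := by
      have : ∀ j, (if j = jbar then -lam jbar else lam j)
          = lam j - (if j = jbar then 2 * lam jbar else 0) := by
        intro j; by_cases h : j = jbar <;> simp [h] <;> ring
      simp_rw [this]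
      rw [Finset.sum_sub_distrib, Finset.sum_ite_eq' Finset.univ jbar]
      simp
    rw [h2, hsum] at h1
    exact h1
  have := hfeas i
  linarith
end
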